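/- Let U and A be Hopf algebras over a field with a non-degenerate dual pairing ⟨,⟩, and let h ▷ a := a₍₁₎⟨h, a₍₂₎⟩ and a ◁ h := ⟨h, a₍₁₎⟩a₍₂₎ be the canonical left and right actions. Then an element h ∈ U satisfies h ▷ a = a ◁ h for all a ∈ A if and only if h lies in the center of U. -/
import Mathlib


open TensorProduct

lemma aux_rid (k U A : Type*) [Field k]
    [Ring U] [HopfAlgebra k U] [Ring A] [HopfAlgebra k A]
    (φ : U →ₗ[k] A →ₗ[k] k) (h h' : U) (t : A ⊗[k] A) :
    φ h' ((TensorProduct.rid k A) ((LinearMap.lTensor A (φ h)) t)) =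
    (LinearMap.mul' k k) ((TensorProduct.map (φ h') (φ h)) t) := by
  induction t using TensorProduct.induction_on with
  | zero => simp
  | tmul a b => simp [mul_comm]
  | add x y hx hy => simp [map_add, hx, hy]

lemma aux_lid (k U A : Type*) [Field k]
    [Ring U] [HopfAlgebra k U] [Ring A] [HopfAlgebra k A]
    (φ : U →ₗ[k] A →ₗ[k] k) (h h' : U) (t : A ⊗[k] A) :
    φ h' ((TensorProduct.lid k A) ((LinearMap.rTensor A (φ h)) t)) =
    (LinearMap.mul' k k) ((TensorProduct.map (φ h) (φ h')) t) := by
  induction t using TensorProduct.induction_on with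
  | zero => simp
  | tmul a b => simp
  | add x y hx hy => simp [map_add, hx, hy]

/-- Let `U` and `A` be Hopf algebras over a field `k` with a dual pairing `φ` that is
multiplicative-comultiplicative (`⟨hh', a⟩ = ⟨h ⊗ h', Δa⟩`) and non-degenerate on both sides.
With canonical actions `h ▷ a = a₍₁₎⟨h,a₍₂₎⟩` and `a ◁ h = ⟨h,a₍₁₎⟩a₍₂₎`,
an element `h` satisfies `h ▷ a = a ◁ h` for all `a` iff `h` is central in `U`. -/
theorem stmt4 (k U A : Type*) [Field k]
    [Ring U] [HopfAlgebra k U] [Ring A] [HopfAlgebra k A]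
    (φ : U →ₗ[k] A →ₗ[k] k)
    (hpair : ∀ (h h' : U) (a : A), φ (h * h') a =
      (LinearMap.mul' k k) ((TensorProduct.map (φ h) (φ h')) (Coalgebra.comul (R := k) a)))
    (hndU : ∀ h : U, (∀ a : A, φ h a = 0) → h = 0)
    (hndA : ∀ a : A, (∀ h : U, φ h a = 0) → a = 0)
    (h : U) :
    (∀ a : A,
        (TensorProduct.rid k A) ((LinearMap.lTensor A (φ h)) (Coalgebra.comul (R := k) a)) =
        (TensorProduct.lid k A) ((LinearMap.rTensor A (φ h)) (Coalgebra.comul (R := k) a)))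
      ↔ (∀ h' : U, h * h' = h' * h) := by
  constructor
  · intro H h'
    have key : ∀ a : A, φ (h * h' - h' * h) a = 0 := by
      intro a
      have h1 := hpair h h' a
      have h2 := hpair h' h a
      rw [← aux_lid k U A φ h h' (Coalgebra.comul a)] at h1
      rw [← aux_rid k U A φ h h' (Coalgebra.comul a)] at h2
      rw [map_sub, LinearMap.sub_apply, h1, h2, H a, sub_self]
    have := hndU _ key
    exact sub_eq_zero.mp this
  · intro H a
    have key : ∀ h' : U,
        φ h' ((TensorProduct.rid k A) ((LinearMap.lTensor A (φ h)) (Coalgebra.comul (R := k) a)) -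
          (TensorProduct.lid k A) ((LinearMap.rTensor A (φ h)) (Coalgebra.comul (R := k) a))) = 0 := by
      intro h'
      rw [map_sub, aux_rid, aux_lid, ← hpair, ← hpair, H h', sub_self]
    have := hndA _ key
    exact sub_eq_zero.mp this
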